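/- For every multi-scale quasiperiodic infinite word x, liminf_{n→∞} p_n(x)/n² ≤ 1. -/

import Mathlib

open Filter MeasureTheory Topology

/-- The finite word `u` occurs in the infinite word `x` at position `i`. -/
def OccursAt {A : Type*} (x : ℕ → A) (u : List A) (i : ℕ) : Prop :=
  ∀ k : Fin u.length, x (i + k) = u.get k

/-- The finite word `u` is a factor of the infinite word `x`. -/
def IsFactor {A : Type*} (x : ℕ → A) (u : List A) : Prop :=
  ∃ i, OccursAt x u i

/-- `q` is a quasiperiod of the infinite word `x`: there is a strictly increasing
sequence of occurrence positions of `q`, starting at `0`, with gaps at most `|q|`. -/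
def IsQuasiperiod {A : Type*} (x : ℕ → A) (q : List A) : Prop :=
  ∃ i : ℕ → ℕ, StrictMono i ∧ i 0 = 0 ∧ (∀ n, OccursAt x q (i n)) ∧
    ∀ n, i (n + 1) - i n ≤ q.length

/-- An infinite word is multi-scale quasiperiodic if it has infinitely many quasiperiods. -/
def MultiScaleQuasiperiodic {A : Type*} (x : ℕ → A) : Prop :=
  {q : List A | IsQuasiperiod x q}.Infinite

/-- The word complexity `p_n(x)`: the number of distinct factors of `x` of length `n`. -/
noncomputable def complexity {A : Type*} (x : ℕ → A) (n : ℕ) : ℕ :=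
  Set.ncard {u : List A | u.length = n ∧ IsFactor x u}

/-- `#(u, x_{0→n-1})`: the number of occurrences of `u` in the length-`n` prefix of `x`. -/
noncomputable def occCount {A : Type*} (x : ℕ → A) (u : List A) (n : ℕ) : ℕ :=
  Set.ncard {i : ℕ | i + u.length ≤ n ∧ OccursAt x u i}

/-- `#(u, v)`: the number of occurrences of the finite word `u` in the finite word `v`. -/
noncomputable def countIn {A : Type*} (u v : List A) : ℕ :=
  Set.ncard {i : ℕ | i + u.length ≤ v.length ∧ u <+: v.drop i}

/-- Starting position of the `n`-th block in the integration `∫_w x`: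
the `k`-th block is `σ_w(x_k)`, of length `|w| - x_k`. -/
def blockStart {B : Type*} (w : List B) (x : ℕ → ℕ) : ℕ → ℕ
  | 0 => 0
  | n + 1 => blockStart w x n + (w.length - x n)

/-- The integration `∫_w x`: the infinite word `σ_w(x_0) σ_w(x_1) σ_w(x_2) ⋯`, where the
substitution `σ_w` sends a letter `i` to the prefix of `w` of length `|w| - i`. -/
noncomputable def integrate {B : Type*} (w : List B) (hw : w ≠ []) (x : ℕ → ℕ) (m : ℕ) : B :=
  w.get ⟨(m - blockStart w x (Nat.findGreatest (fun j => blockStart w x j ≤ m) m)) % w.length,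
    Nat.mod_lt _ (List.length_pos_iff.mpr hw)⟩

lemma complexity_le_sq_of_quasiperiod {A : Type*} (x : ℕ → A) (q : List A)
    (hq : IsQuasiperiod x q) (hne : q ≠ []) :
    complexity x q.length ≤ q.length ^ 2 := by
  set ℓ := q.length with hℓ
  have hℓpos : 0 < ℓ := List.length_pos_iff.mpr hne
  obtain ⟨i, hmono, h0, hocc, hgap⟩ := hq
  set g : Fin ℓ × Fin ℓ → List A := fun p => ((q.take (p.1.1 + 1) ++ q).drop p.2.1).take ℓ with hg
  have hsub : {u : List A | u.length = ℓ ∧ IsFactor x u} ⊆ Set.range g := by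
    rintro u ⟨hlen, p, hup⟩
    -- find the last occurrence position ≤ p
    have him : i (Nat.findGreatest (fun n => i n ≤ p) p) ≤ p :=
      Nat.findGreatest_spec (P := fun n => i n ≤ p) (Nat.zero_le p) (by simp [h0])
    set m := Nat.findGreatest (fun n => i n ≤ p) p with hm
    have him' : p < i (m + 1) := by
      rcases le_or_gt (i (m + 1)) p with hc | hc
      · exact absurd hc (Nat.findGreatest_is_greatest (P := fun n => i n ≤ p)
          (Nat.lt_succ_self m) (le_trans hmono.le_apply hc))
      · exact hc
    have hstep : i m < i (m + 1) := hmono (Nat.lt_succ_self m)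
    have hgapm : i (m + 1) - i m ≤ ℓ := hgap m
    obtain ⟨s, r, his, hp, hs1, hsℓ, hrs⟩ :
        ∃ s r, i (m + 1) = i m + s ∧ p = i m + r ∧ 1 ≤ s ∧ s ≤ ℓ ∧ r < s :=
      ⟨i (m + 1) - i m, p - i m, by omega, by omega, by omega, by omega, by omega⟩
    obtain ⟨t, rfl⟩ : ∃ t', s = t' + 1 := ⟨s - 1, by omega⟩
    refine ⟨(⟨t, by omega⟩, ⟨r, by omega⟩), ?_⟩
    have hvlen : (q.take (t + 1) ++ q).length = (t + 1) + ℓ := by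
      simp [Nat.min_eq_left (show t + 1 ≤ q.length from hsℓ)]
      rfl
    have hxv : ∀ j (hj : j < (t + 1) + ℓ),
        x (i m + j) = (q.take (t + 1) ++ q)[j]'(by omega) := by
      intro j hj
      by_cases hjs : j < t + 1
      · have hjℓ : j < ℓ := by omega
        refine (hocc m ⟨j, hjℓ⟩).trans ?_
        simp only [List.get_eq_getElem]
        rw [List.getElem_append_left (by simp [Nat.min_eq_left hsℓ]; omega)]
        exact (List.getElem_take).symm
      · have hjs' : j - (t + 1) < ℓ := by omega
        have h1 : x (i (m + 1) + (j - (t + 1))) = q.get ⟨j - (t + 1), hjs'⟩ :=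
          hocc (m + 1) ⟨j - (t + 1), hjs'⟩
        rw [his] at h1
        have hadd : i m + (t + 1) + (j - (t + 1)) = i m + j := by omega
        rw [hadd] at h1
        refine h1.trans ?_
        simp only [List.get_eq_getElem]
        rw [List.getElem_append_right (by simp [Nat.min_eq_left hsℓ]; omega)]
        simp [Nat.min_eq_left (show t + 1 ≤ q.length from hsℓ)]
    symm
    show u = ((q.take (t + 1) ++ q).drop r).take ℓ
    have hdlen : ((q.take (t + 1) ++ q).drop r).length = (t + 1) + ℓ - r := by
      rw [List.length_drop, hvlen]
    apply List.ext_getElem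
    · simp only [List.length_take, hdlen, hlen]
      omega
    · intro k h1 h2
      have hkℓ : k < ℓ := by
        simp only [List.length_take, hdlen] at h2; omega
      have hrk : r + k < (t + 1) + ℓ := by omega
      have h3 : k < ((q.take (t + 1) ++ q).drop r).length := by omega
      calc u[k] = x (p + k) := (hup ⟨k, by omega⟩).symm
        _ = x (i m + (r + k)) := by rw [hp]; ring_nf
        _ = (q.take (t + 1) ++ q)[r + k]'(by omega) := hxv _ hrk
        _ = ((q.take (t + 1) ++ q).drop r)[k]'h3 := (List.getElem_drop).symm
        _ = (((q.take (t + 1) ++ q).drop r).take ℓ)[k]'h2 := (List.getElem_take).symm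
  calc complexity x ℓ ≤ (Set.range g).ncard :=
        Set.ncard_le_ncard hsub (Set.finite_range g)
    _ = (g '' Set.univ).ncard := by rw [Set.image_univ]
    _ ≤ (Set.univ : Set (Fin ℓ × Fin ℓ)).ncard := Set.ncard_image_le Set.finite_univ
    _ = ℓ * ℓ := by simp [Set.ncard_univ]
    _ = ℓ ^ 2 := (sq ℓ).symm

/-- for a multi-scale quasiperiodic word `x`,
`liminf_{n→∞} p_n(x)/n² ≤ 1`. -/
theorem liminf_complexity_div_sq_le_one {A : Type*} [Finite A]
    (x : ℕ → A) (h : MultiScaleQuasiperiodic x) :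
    Filter.liminf (fun n : ℕ => (complexity x n : ℝ) / (n : ℝ) ^ 2) Filter.atTop ≤ 1 := by
  apply Filter.liminf_le_of_frequently_le
  · rw [Filter.frequently_atTop]
    intro N
    have hstep : ∃ q : List A, IsQuasiperiod x q ∧ N + 1 ≤ q.length := by
      by_contra hc
      push_neg at hc
      apply h
      apply Set.Finite.subset (List.finite_length_le A N)
      intro q hq
      have := hc q hq
      simp only [Set.mem_setOf_eq]
      omega
    obtain ⟨q, hq, hlen⟩ := hstep
    refine ⟨q.length, by omega, ?_⟩
    have hne : q ≠ [] := by intro hq0; rw [hq0] at hlen; simp at hlen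
    have hb := complexity_le_sq_of_quasiperiod x q hq hne
    have hq0 : (0 : ℝ) < (q.length : ℝ) := by exact_mod_cast (show 0 < q.length by omega)
    have hpos : (0 : ℝ) < (q.length : ℝ) ^ 2 := by positivity
    rw [div_le_one hpos]
    exact_mod_cast hb
  · exact Filter.isBoundedUnder_of ⟨0, fun n => by positivity⟩
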